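/- arXiv:2208.04495 — 3 statements merged into one kernel-verified Lean document; each statement's English description precedes it below -/
import Mathlib

section
/- Let β ∈ ℝ, π ∈ (0,1), and let κ : ℕ → ℝ be a sequence with 0 ≤ κ(n) for all n and κ bounded above. For each n define f_n : ℝ → ℝ by f_n(z) = β / ( √(n·π·(1−π))·(1+κ(n))/z − √(π·(1−π)/n)·κ(n)·z ) (with the convention that division by zero yields 0). Then for every ε > 0, the standard Gaussian measure of the set { z ∈ ℝ : ε ≤ |f_n(z)| } tends to 0 as n → ∞; that is, the random bias f_n(Z) with Z ~ N(0,1) converges to 0 in probability (hence in distribution). (Theorem 1 of the paper.) -/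
open Filter MeasureTheory ProbabilityTheory

private lemma aux_denom_bound (c C d s A B w k : ℝ) (hc0 : 0 < c) (hC0 : 0 ≤ C)
    (hd0 : 0 < d) (hs0 : 0 < s) (hk : 0 ≤ k) (hB0 : 0 ≤ B)
    (hA' : A = s * c * (1 + k)) (hB' : B * s = c * k)
    (hw : 0 < w) (hzd : w ≤ d * s) (hd2 : d * d ≤ 1 / 2)
    (hdc : d ≤ c / (2 * (C + 1))) :
    C + 1 ≤ A / w - B * w := by
  have hA0 : 0 < A := by rw [hA']; positivity
  have hB2 : B * (w * w) ≤ A / 2 := by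
    have h1 : w * w ≤ (d * s) * (d * s) := by nlinarith
    have h2 : B * (w * w) ≤ B * ((d * s) * (d * s)) := by nlinarith
    have h3 : B * ((d * s) * (d * s)) = (B * s) * s * (d * d) := by ring
    have h4 : (c * k) * s * (d * d) ≤ (c * k) * s * (1 / 2) :=
      mul_le_mul_of_nonneg_left hd2 (by positivity)
    rw [hA']
    nlinarith [mul_pos hs0 hc0]
  have hBz : B * w ≤ A / (2 * w) := by
    rw [le_div_iff₀ (by positivity)]
    nlinarith
  have hAz : C + 1 ≤ A / (2 * w) := by
    rw [le_div_iff₀ (by positivity)]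
    have h2 : (C + 1) * (2 * d) ≤ c := by
      rw [le_div_iff₀ (by positivity)] at hdc
      nlinarith
    calc (C + 1) * (2 * w) ≤ (C + 1) * (2 * (d * s)) := by nlinarith
      _ = ((C + 1) * (2 * d)) * s := by ring
      _ ≤ c * s := by nlinarith
      _ ≤ A := by rw [hA']; nlinarith
  have h2 : A / w - A / (2 * w) = A / (2 * w) := by
    field_simp
    ring
  linarith

/-- Theorem 1 of the paper: if the signal-to-noise ratio `κ n` is nonnegative and bounded
above, the random asymptotic bias
`f_n(Z) = β / ( √(n·π·(1−π))·(1+κ n)/Z − √(π·(1−π)/n)·κ n·Z )`, with `Z ~ N(0,1)`,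
converges to `0` in probability (hence in distribution) as `n → ∞`. -/
theorem bias_tendsto_zero_in_probability_of_bounded_snr
    (β π : ℝ) (hπ : π ∈ Set.Ioo (0 : ℝ) 1)
    (κ : ℕ → ℝ) (hκ0 : ∀ n, 0 ≤ κ n) (hκbd : ∃ M, ∀ n, κ n ≤ M)
    (f : ℕ → ℝ → ℝ)
    (hf : ∀ n z, f n z =
      β / (Real.sqrt (n * π * (1 - π)) * (1 + κ n) / z
            - Real.sqrt (π * (1 - π) / n) * κ n * z)) :
    ∀ ε > (0 : ℝ),
      Tendsto (fun n : ℕ => gaussianReal 0 1 {z : ℝ | ε ≤ |f n z|}) atTop (nhds 0) := by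
  obtain ⟨hπ0, hπ1⟩ := hπ
  intro ε hε
  obtain ⟨c, hc⟩ : ∃ c : ℝ, c = Real.sqrt (π * (1 - π)) := ⟨_, rfl⟩
  have hc0 : 0 < c := hc ▸ Real.sqrt_pos.2 (by nlinarith)
  obtain ⟨C, hC⟩ : ∃ C : ℝ, C = |β| / ε := ⟨_, rfl⟩
  have hC0 : 0 ≤ C := hC ▸ div_nonneg (abs_nonneg _) hε.le
  obtain ⟨d, hd⟩ : ∃ d : ℝ, d = min (Real.sqrt (1 / 2)) (c / (2 * (C + 1))) := ⟨_, rfl⟩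
  have hd0 : 0 < d := hd ▸ lt_min (Real.sqrt_pos.2 (by norm_num)) (by positivity)
  have hd2 : d * d ≤ 1 / 2 := by
    have h1 : d ≤ Real.sqrt (1 / 2) := hd ▸ min_le_left _ _
    nlinarith [Real.sq_sqrt (by norm_num : (0:ℝ) ≤ (1:ℝ)/2), hd0.le]
  have hdc : d ≤ c / (2 * (C + 1)) := hd ▸ min_le_right _ _
  have hεC : ε * (C + 1) = |β| + ε := by
    rw [hC]; field_simp
  obtain ⟨t, htdef⟩ : ∃ t : ℕ → ℝ, ∀ n, t n = d * Real.sqrt n := ⟨_, fun _ => rfl⟩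
  -- key pointwise inclusion
  have key : ∀ n z, ε ≤ |f n z| → t n < |z| := by
    intro n z hzε
    by_contra hle
    push_neg at hle
    rcases Nat.eq_zero_or_pos n with rfl | hn
    · have h0 : f 0 z = 0 := by rw [hf]; norm_num
      rw [h0] at hzε; simp at hzε; linarith
    · rcases eq_or_ne z 0 with rfl | hz
      · have h0 : f n 0 = 0 := by rw [hf]; simp
        rw [h0] at hzε; simp at hzε; linarith
      have hw : 0 < |z| := abs_pos.2 hz
      obtain ⟨s, hs⟩ : ∃ s : ℝ, s = Real.sqrt n := ⟨_, rfl⟩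
      have hs0 : 0 < s := hs ▸ Real.sqrt_pos.2 (by exact_mod_cast hn)
      obtain ⟨A, hA⟩ : ∃ A : ℝ, A = s * c * (1 + κ n) := ⟨_, rfl⟩
      obtain ⟨B, hB⟩ : ∃ B : ℝ, B = c / s * κ n := ⟨_, rfl⟩
      have hκn := hκ0 n
      have hA0 : 0 < A := by rw [hA]; positivity
      have hB0 : 0 ≤ B := by rw [hB]; positivity
      have hfz : f n z = β / (A / z - B * z) := by
        rw [hf]
        congr 2
        · rw [mul_assoc, Real.sqrt_mul (Nat.cast_nonneg n), hA, hc, hs]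
        · rw [Real.sqrt_div (by nlinarith : (0:ℝ) ≤ π * (1 - π)), hB, hc, hs]
      have hB' : B * s = c * κ n := by
        rw [hB]; field_simp
      have hzd : |z| ≤ d * s := by rw [hs]; rw [htdef] at hle; exact hle
      have hAz : C + 1 ≤ A / |z| - B * |z| :=
        aux_denom_bound c C d s A B |z| (κ n) hc0 hC0 hd0 hs0 hκn hB0 hA hB' hw hzd hd2 hdc
      have hD : C + 1 ≤ |A / z - B * z| := by
        have h1 : A / |z| - B * |z| ≤ |A / z - B * z| := by
          have h2 := abs_sub_abs_le_abs_sub (A / z) (B * z)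
          rwa [abs_div, abs_mul, abs_of_nonneg hA0.le, abs_of_nonneg hB0] at h2
        linarith
      have hDpos : 0 < |A / z - B * z| := lt_of_lt_of_le (by positivity) hD
      have hfsmall : |f n z| < ε := by
        rw [hfz, abs_div, div_lt_iff₀ hDpos]
        nlinarith
      linarith
  -- upper bound sets
  have hmeas : ∀ n : ℕ, NullMeasurableSet {z : ℝ | t n < |z|} (gaussianReal 0 1) := by
    intro n
    exact (measurableSet_lt measurable_const measurable_id.abs).nullMeasurableSet
  have hanti : Antitone (fun n : ℕ => {z : ℝ | t n < |z|}) := by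
    intro m n hmn z hz
    have h1 : Real.sqrt m ≤ Real.sqrt n := Real.sqrt_le_sqrt (Nat.cast_le.2 hmn)
    have h2 : t m ≤ t n := by
      rw [htdef, htdef]
      nlinarith [hd0.le]
    exact lt_of_le_of_lt h2 hz
  have hiInter : (⋂ n : ℕ, {z : ℝ | t n < |z|}) = ∅ := by
    ext z
    simp only [Set.mem_iInter, Set.mem_setOf_eq, Set.mem_empty_iff_false, iff_false, not_forall,
      not_lt]
    obtain ⟨n, hn⟩ := exists_nat_gt ((|z| / d) ^ 2)
    refine ⟨n, ?_⟩
    have h1 : |z| / d ≤ Real.sqrt n := by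
      rcases le_or_gt (|z| / d) 0 with h | h
      · exact h.trans (Real.sqrt_nonneg _)
      · have h3 := Real.sqrt_le_sqrt hn.le
        rwa [Real.sqrt_sq h.le] at h3
    rw [htdef]
    calc |z| = d * (|z| / d) := by field_simp
      _ ≤ d * Real.sqrt n := by nlinarith [hd0.le]
  have hup : Tendsto (fun n : ℕ => gaussianReal 0 1 {z : ℝ | t n < |z|}) atTop (nhds 0) := by
    have h1 := tendsto_measure_iInter_atTop hmeas hanti ⟨0, measure_ne_top _ _⟩
    rw [hiInter, measure_empty] at h1
    exact h1
  refine tendsto_of_tendsto_of_tendsto_of_le_of_le tendsto_const_nhds hup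
    (fun n => zero_le) (fun n => measure_mono ?_)
  intro z hz
  exact key n z hz
end

section
/- Let π ∈ (0,1), σ²_ε ≥ 0, β₂ ∈ ℝ, v ≥ 0 and s > 0 with v + s > 0. For each n define g_n : ℝ → ℝ by g_n(z) = n·(σ²_ε + β₂²·s)·(v + s) / ( n·π·(1−π)·(v + s − v·z²/n) ) (with the convention that division by zero yields 0), and set L = (σ²_ε + β₂²·s)/(π·(1−π)). Then for every ε > 0, the standard Gaussian measure of the set { z ∈ ℝ : ε ≤ |g_n(z) − L| } tends to 0 as n → ∞; that is, n times the asymptotic variance, evaluated at a standard normal Z, converges in probability (hence in distribution) to L. (Theorem 2 of the paper.) -/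
open Filter MeasureTheory ProbabilityTheory

/-- Theorem 2 of the paper: with a noisy covariate (error variance `s`, true covariate
variance `v`), `n` times the asymptotic variance of the treatment-effect estimate,
`g_n(Z) = n·(σ²_ε + β₂²·s)·(v + s) / ( n·π·(1−π)·(v + s − v·Z²/n) )` with `Z ~ N(0,1)`,
converges in probability (hence in distribution) to
`L = (σ²_ε + β₂²·s)/(π·(1−π))` as `n → ∞`. -/
theorem variance_noisy_covariate_tendsto_in_probability
    (π σε2 β₂ v s : ℝ) (hπ : π ∈ Set.Ioo (0 : ℝ) 1)
    (hσε2 : 0 ≤ σε2) (hv : 0 ≤ v) (hs : 0 < s) (hvs : 0 < v + s)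
    (g : ℕ → ℝ → ℝ)
    (hg : ∀ n z, g n z =
      (n : ℝ) * (σε2 + β₂ ^ 2 * s) * (v + s)
        / ((n : ℝ) * π * (1 - π) * (v + s - v * z ^ 2 / n)))
    (L : ℝ) (hL : L = (σε2 + β₂ ^ 2 * s) / (π * (1 - π))) :
    ∀ ε > (0 : ℝ),
      Tendsto (fun n : ℕ => gaussianReal 0 1 {z : ℝ | ε ≤ |g n z - L|}) atTop (nhds 0) := by
  obtain ⟨hπ0, hπ1⟩ := hπ
  set A := σε2 + β₂ ^ 2 * s with hA
  have h1π : 0 < 1 - π := by linarith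
  have hπne : π * (1 - π) ≠ 0 := by positivity
  have hmeas : ∀ n, AEStronglyMeasurable (g n) (gaussianReal 0 1) := by
    intro n
    have : g n = fun z => (n : ℝ) * A * (v + s)
        / ((n : ℝ) * π * (1 - π) * (v + s - v * z ^ 2 / n)) := funext fun z => hg n z
    rw [this]
    refine (Measurable.div (by measurability) (by measurability)).aestronglyMeasurable
  have hptw : ∀ z : ℝ, Tendsto (fun n : ℕ => g n z) atTop (nhds L) := by
    intro z
    have hden : Tendsto (fun n : ℕ => π * (1 - π) * (v + s - v * z ^ 2 / n)) atTop
        (nhds (π * (1 - π) * (v + s))) := by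
      have h0 : Tendsto (fun n : ℕ => v * z ^ 2 / n) atTop (nhds 0) :=
        tendsto_const_div_atTop_nhds_zero_nat (v * z ^ 2)
      have := (tendsto_const_nhds.sub h0 : Tendsto (fun n : ℕ => v + s - v * z ^ 2 / n)
        atTop (nhds (v + s - 0)))
      rw [sub_zero] at this
      exact tendsto_const_nhds.mul this
    have hdne : π * (1 - π) * (v + s) ≠ 0 := by positivity
    have h2 : Tendsto (fun n : ℕ => A * (v + s) / (π * (1 - π) * (v + s - v * z ^ 2 / n)))
        atTop (nhds L) := by
      have := (tendsto_const_nhds : Tendsto (fun _ : ℕ => A * (v + s)) atTop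
        (nhds (A * (v + s)))).div hden hdne
      convert this using 2
      case e'_3 => rfl
      rw [hL, hA]
      field_simp
    refine h2.congr' ?_
    filter_upwards [eventually_ge_atTop 1] with n hn
    have hnne : (n : ℝ) ≠ 0 := by positivity
    rw [hg n z, show (n : ℝ) * A * (v + s) = (n : ℝ) * (A * (v + s)) by ring,
      show (n : ℝ) * π * (1 - π) * (v + s - v * z ^ 2 / n)
        = (n : ℝ) * (π * (1 - π) * (v + s - v * z ^ 2 / n)) by ring,
      mul_div_mul_left _ _ hnne]
  have h := tendstoInMeasure_of_tendsto_ae (μ := gaussianReal 0 1)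
    (f := fun n => g n) (g := fun _ => L) hmeas
    (Filter.Eventually.of_forall hptw)
  intro ε hε
  have := h (ENNReal.ofReal ε) (ENNReal.ofReal_pos.mpr hε)
  simpa [edist_dist, ENNReal.ofReal_le_ofReal_iff dist_nonneg, Real.dist_eq] using this
end

section
/- Let π ∈ (0,1) and d, v, s ∈ ℝ with π(1−π)(v+s) − π²(1−π)²d² ≠ 0. Let N be the 3×3 real matrix with rows (1, π, 0), (π, π, −π(1−π)d), (0, −π(1−π)d, v + s), let D = diag(0, 0, s), and let β° = (β₀, β₁, β₂) ∈ ℝ³. Then the second component (the component corresponding to the treatment effect) of the vector N⁻¹ · (D · β°) equals s·β₂·π(1−π)·d / ( π(1−π)(v+s) − π²(1−π)²d² ). (This is the matrix algebra behind the Appendix A1 asymptotic bias formula b₁ for the treatment-effect estimate under a noisy covariate.) -/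
open Matrix

/-! By Cramer's rule, the treatment component of `N⁻¹ (D β°)` is the determinant of `N` with its
second column replaced by `D β° = (0, 0, s β₂)`, divided by `det N`. Expanding along the first row,
the numerator is `s β₂ π(1−π) d` and the denominator is `π(1−π)(v+s) − π²(1−π)²d²`. -/

/-- When `det A = 0` both sides are `0`: `A⁻¹ = 0` by convention, and so is division by zero. -/
theorem Matrix.inv_mulVec_apply_eq_det_updateCol_div {K n : Type*} [Field K] [Fintype n]
    [DecidableEq n] (A : Matrix n n K) (b : n → K) (i : n) :
    (A⁻¹ *ᵥ b) i = (A.updateCol i b).det / A.det := by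
  by_cases hA : A.det = 0
  · rw [nonsing_inv_apply_not_isUnit A (by simpa using hA), hA]
    simp
  · have hcramer := congrFun (A.det_smul_inv_mulVec_eq_cramer b (isUnit_iff_ne_zero.mpr hA)) i
    rw [cramer_apply, Pi.smul_apply, smul_eq_mul] at hcramer
    rw [← hcramer, mul_div_cancel_left₀ _ hA]

theorem diagonal_mulVec_fin_three {R : Type*} [NonUnitalNonAssocSemiring R] (a b c x y z : R) :
    diagonal ![a, b, c] *ᵥ ![x, y, z] = ![a * x, b * y, c * z] := by
  ext i
  fin_cases i <;> simp [mulVec_diagonal]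

section NormalizedDesign

variable (π d v s : ℝ)

def normalizedDesign : Matrix (Fin 3) (Fin 3) ℝ :=
  !![1, π, 0;
     π, π, -(π * (1 - π) * d);
     0, -(π * (1 - π) * d), v + s]

theorem det_normalizedDesign :
    (normalizedDesign π d v s).det
      = π * (1 - π) * (v + s) - π ^ 2 * (1 - π) ^ 2 * d ^ 2 := by
  rw [normalizedDesign, det_fin_three]
  simp only [of_apply, cons_val', cons_val_zero, cons_val_one, cons_val, cons_val_fin_one]
  ring

theorem det_updateCol_one_normalizedDesign (w : ℝ) :
    ((normalizedDesign π d v s).updateCol 1 ![0, 0, w]).det = w * (π * (1 - π)) * d := by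
  rw [normalizedDesign, det_fin_three]
  simp only [ne_eq, Fin.reduceEq, not_false_eq_true, updateCol_ne, updateCol_self, of_apply,
    cons_val', cons_val_zero, cons_val_one, cons_val, cons_val_fin_one]
  ring

end NormalizedDesign

theorem bias_vector_treatment_component_general
    (π d v s β₀ β₁ β₂ : ℝ)
    (N D : Matrix (Fin 3) (Fin 3) ℝ) (βo : Fin 3 → ℝ)
    (hN : N = !![1, π, 0;
                 π, π, -(π * (1 - π) * d);
                 0, -(π * (1 - π) * d), v + s])
    (hD : D = Matrix.diagonal ![0, 0, s])
    (hβ : βo = ![β₀, β₁, β₂]) :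
    N⁻¹.mulVec (D.mulVec βo) 1
      = s * β₂ * (π * (1 - π)) * d
          / (π * (1 - π) * (v + s) - π ^ 2 * (1 - π) ^ 2 * d ^ 2) := by
  have hDβ : D *ᵥ βo = ![0, 0, s * β₂] := by
    rw [hD, hβ, diagonal_mulVec_fin_three, zero_mul, zero_mul]
  rw [hDβ, hN, ← normalizedDesign, inv_mulVec_apply_eq_det_updateCol_div,
    det_updateCol_one_normalizedDesign, det_normalizedDesign]

/-- Matrix algebra behind the Appendix A1 asymptotic bias formula: for the limiting
normalized design matrix `N` with rows `(1, π, 0)`, `(π, π, −π(1−π)d)`,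
`(0, −π(1−π)d, v+s)` with nonzero determinant, and `D = diag(0,0,s)`, the second
component (treatment-effect component) of `N⁻¹ · (D · β°)` equals
`s·β₂·π(1−π)·d / ( π(1−π)(v+s) − π²(1−π)²d² )`. -/
theorem bias_vector_treatment_component
    (π d v s β₀ β₁ β₂ : ℝ) (hπ : π ∈ Set.Ioo (0 : ℝ) 1)
    (hdet : π * (1 - π) * (v + s) - π ^ 2 * (1 - π) ^ 2 * d ^ 2 ≠ 0)
    (N D : Matrix (Fin 3) (Fin 3) ℝ) (βo : Fin 3 → ℝ)
    (hN : N = !![1, π, 0;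
                 π, π, -(π * (1 - π) * d);
                 0, -(π * (1 - π) * d), v + s])
    (hD : D = Matrix.diagonal ![0, 0, s])
    (hβ : βo = ![β₀, β₁, β₂]) :
    N⁻¹.mulVec (D.mulVec βo) 1
      = s * β₂ * (π * (1 - π)) * d
          / (π * (1 - π) * (v + s) - π ^ 2 * (1 - π) ^ 2 * d ^ 2) :=
  bias_vector_treatment_component_general π d v s β₀ β₁ β₂ N D βo hN hD hβ
end
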